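/- Let K ≥ 1 and T ≥ 1 be real numbers and δ > 0. Let w be an even positive integer with w ≥ (4/δ²)·(√(log(2K T²)) + √(log(2T)))², set b = √((w/2)·log(2K T²)) and c = 2·√(log(2T)/w). Then δ ≥ 2b/w + c and 2·exp(−w·c²/4) = 1/T. Consequently, if Z_1, …, Z_{w/2} are independent [0,1]-valued with common mean μ₁ and Z_{w/2+1}, …, Z_w are independent [0,1]-valued with common mean μ₂, all mutually independent, and |μ₂ − μ₁| ≥ δ, then ℙ(|S| > b) ≥ 1 − 1/T, where S = Σ_{ℓ=w/2+1}^{w} Z_ℓ − Σ_{ℓ=1}^{w/2} Z_ℓ. -/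

import Mathlib

/-!
Since `|𝔼S| = (w/2)|μ₂ - μ₁| ≥ wδ/2`, on the event `|S| ≤ b` the centred statistic `S - 𝔼S`
deviates from `0`, against the sign of `𝔼S`, by at least `wδ/2 - b ≥ wc/2` (this is the
inequality `δ ≥ 2b/w + c`). By Hoeffding's lemma `S - 𝔼S`, a signed sum of `w` independent
centred `[0,1]`-valued variables, is sub-Gaussian with variance proxy `w/4`, so that event has
probability at most `exp(-wc²/2) ≤ exp(-wc²/4) = 1/(2T)`.
-/

open MeasureTheory ProbabilityTheory Real Finset
open scoped NNReal

namespace ProbabilityTheory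

variable {Ω : Type*} [MeasurableSpace Ω] {μ : Measure Ω}

lemma hasSubgaussianMGF_sum_sign_mul_sub_integral [IsProbabilityMeasure μ] {ι : Type*}
    {u : Finset ι} {Z : ι → Ω → ℝ} {a : ι → ℝ}
    (hindep : iIndepFun (fun i : u ↦ Z i) μ) (hmeas : ∀ i ∈ u, AEMeasurable (Z i) μ)
    (hbdd : ∀ i ∈ u, ∀ᵐ ω ∂μ, Z i ω ∈ Set.Icc (0 : ℝ) 1) (ha : ∀ i ∈ u, |a i| = 1) :
    HasSubgaussianMGF (fun ω ↦ ∑ i ∈ u, a i * (Z i ω - μ[Z i])) (#u / 4) μ := by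
  have hterm (i : u) : HasSubgaussianMGF (fun ω ↦ a i * (Z i ω - μ[Z i])) (1 / 4) μ := by
    have ha_sq : a i ^ 2 = 1 := by rw [← sq_abs, ha i i.2, one_pow]
    convert (hasSubgaussianMGF_of_mem_Icc (hmeas i i.2) (hbdd i i.2)).const_mul (a i) using 1
    refine NNReal.eq ?_
    -- `const_mul` writes the factor `a i ^ 2` as an anonymous subtype element.
    change (1 / 4 : ℝ) = a i ^ 2 * ((‖(1 : ℝ) - 0‖₊ : ℝ) / 2) ^ 2
    norm_num [ha_sq]
  have hindep' : iIndepFun (fun (i : u) ω ↦ a i * (Z i ω - μ[Z i])) μ :=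
    hindep.comp (fun (i : u) (x : ℝ) ↦ a i * (x - ∫ ω, Z (i : ι) ω ∂μ)) fun i ↦ by fun_prop
  have hsum := HasSubgaussianMGF.sum_of_iIndepFun hindep' (s := univ) fun i _ ↦ hterm i
  simp only [sum_const, card_univ, Fintype.card_coe, nsmul_eq_mul] at hsum
  convert hsum using 2 with ω
  · exact (sum_coe_sort u fun i ↦ a i * (Z i ω - μ[Z i])).symm
  · ring

lemma HasSubgaussianMGF.measureReal_abs_le_le_exp [IsFiniteMeasure μ] {X : Ω → ℝ} {m b : ℝ}
    {c : ℝ≥0} (h : HasSubgaussianMGF (fun ω ↦ X ω - m) c μ) (hb : b ≤ |m|) :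
    μ.real {ω | |X ω| ≤ b} ≤ exp (-(|m| - b) ^ 2 / (2 * c)) := by
  rcases le_total 0 m with hm | hm
  · rw [abs_of_nonneg hm] at hb ⊢
    calc μ.real {ω | |X ω| ≤ b} ≤ μ.real {ω | m - b ≤ -(X ω - m)} :=
          measureReal_mono fun ω (hω : |X ω| ≤ b) ↦
            show m - b ≤ -(X ω - m) by linarith [le_abs_self (X ω)]
      _ ≤ _ := h.neg.measure_ge_le (sub_nonneg.2 hb)
  · rw [abs_of_nonpos hm] at hb ⊢
    calc μ.real {ω | |X ω| ≤ b} ≤ μ.real {ω | -m - b ≤ X ω - m} :=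
          measureReal_mono fun ω (hω : |X ω| ≤ b) ↦
            show -m - b ≤ X ω - m by linarith [neg_abs_le (X ω)]
      _ ≤ _ := h.measure_ge_le (sub_nonneg.2 hb)

lemma ofReal_one_sub_le_measure_of_measureReal_compl_le [IsProbabilityMeasure μ] {s : Set Ω}
    {p : ℝ} (h : μ.real sᶜ ≤ p) : ENNReal.ofReal (1 - p) ≤ μ s := by
  have hcover : 1 ≤ μ s + μ sᶜ := by
    simpa [Set.union_compl_self] using measure_union_le (μ := μ) s sᶜ
  calc ENNReal.ofReal (1 - p) ≤ ENNReal.ofReal (1 - μ.real sᶜ) := by gcongr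
    _ = 1 - μ sᶜ := by
      rw [ENNReal.ofReal_sub _ measureReal_nonneg, ENNReal.ofReal_one, ofReal_measureReal]
    _ ≤ μ s := tsub_le_iff_right.2 hcover

end ProbabilityTheory

lemma Finset.sum_Icc_sign_mul {R : Type*} [Ring R] (g : ℕ → R) {n k : ℕ} (h : n ≤ k) :
    ∑ i ∈ Icc 1 k, (if i ≤ n then -1 else 1) * g i =
      ∑ i ∈ Icc (n + 1) k, g i - ∑ i ∈ Icc 1 n, g i := by
  rw [Icc_add_one_left_eq_Ioc, show Icc 1 n = Ioc 0 n from Icc_add_one_left_eq_Ioc 0 n,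
    show Icc 1 k = Ioc 0 k from Icc_add_one_left_eq_Ioc 0 k,
    ← sum_Ioc_consecutive _ (Nat.zero_le n) h, sub_eq_neg_add, ← sum_neg_distrib]
  congr 1 <;> refine sum_congr rfl fun i hi ↦ ?_ <;> rw [mem_Ioc] at hi
  · simp [hi.2]
  · simp [show ¬i ≤ n by omega]

lemma Even.sum_Icc_sign_mul_sub {w : ℕ} (hw : Even w) {f g : ℕ → ℝ} {μ₁ μ₂ : ℝ}
    (hg₁ : ∀ i ∈ Icc 1 (w / 2), g i = μ₁) (hg₂ : ∀ i ∈ Icc (w / 2 + 1) w, g i = μ₂) :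
    ∑ i ∈ Icc 1 w, (if i ≤ w / 2 then -1 else 1) * (f i - g i) =
      (∑ i ∈ Icc (w / 2 + 1) w, f i - ∑ i ∈ Icc 1 (w / 2), f i) - w / 2 * (μ₂ - μ₁) := by
  have hhalf : ((w / 2 : ℕ) : ℝ) = w / 2 := by
    rw [Nat.cast_div_charZero (even_iff_two_dvd.1 hw), Nat.cast_ofNat]
  have hsum₁ : ∑ i ∈ Icc 1 (w / 2), g i = w / 2 * μ₁ := by
    rw [sum_congr rfl hg₁, sum_const, Nat.card_Icc, nsmul_eq_mul, Nat.add_sub_cancel, hhalf]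
  have hsum₂ : ∑ i ∈ Icc (w / 2 + 1) w, g i = w / 2 * μ₂ := by
    rw [sum_congr rfl hg₂, sum_const, Nat.card_Icc, nsmul_eq_mul, Nat.add_sub_add_right,
      Nat.cast_sub (Nat.div_le_self w 2), hhalf]
    ring
  rw [sum_Icc_sign_mul _ (Nat.div_le_self w 2), sum_sub_distrib, sum_sub_distrib, hsum₁, hsum₂]
  ring

namespace Real

lemma two_mul_sqrt_div_add_le {w L₁ L₂ δ : ℝ} (hw : 0 < w) (hδ : 0 < δ)
    (hwbig : 4 / δ ^ 2 * (√L₁ + √L₂) ^ 2 ≤ w) :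
    2 * √(w / 2 * L₁) / w + 2 * √(L₂ / w) ≤ δ := by
  have hroot : 2 * (√L₁ + √L₂) ≤ δ * √w := by
    refine le_of_sq_le_sq ?_ (by positivity)
    rw [mul_pow, mul_pow, sq_sqrt hw.le]
    rw [div_mul_eq_mul_div, div_le_iff₀ (by positivity)] at hwbig
    linarith
  rw [sqrt_mul (by positivity), sqrt_div' _ hw.le]
  calc 2 * (√(w / 2) * √L₁) / w + 2 * (√L₂ / √w)
      ≤ 2 * (√w * √L₁) / w + 2 * (√L₂ / √w) := by gcongr; linarith
    _ = 2 * (√L₁ + √L₂) / √w := by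
      field_simp
      rw [sq_sqrt hw.le]
      ring
    _ ≤ δ := by rwa [div_le_iff₀ (sqrt_pos.2 hw)]

lemma two_mul_exp_neg_mul_sq_div_four {w T : ℝ} (hw : 0 < w) (hT : 1 ≤ 2 * T) :
    2 * exp (-w * (2 * √(log (2 * T) / w)) ^ 2 / 4) = 1 / T := by
  have hlog : 0 ≤ log (2 * T) := log_nonneg hT
  rw [mul_pow, sq_sqrt (by positivity), show -w * (2 ^ 2 * (log (2 * T) / w)) / 4 = -log (2 * T)
    by field_simp; ring, exp_neg, exp_log (by linarith)]
  field_simp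

lemma neg_sq_div_le_neg_mul_sq_div_four {w c x : ℝ} (hw : 0 < w) (hc : 0 ≤ c)
    (hx : w * c / 2 ≤ x) : -x ^ 2 / (2 * (w / 4)) ≤ -w * c ^ 2 / 4 := by
  have hsq : (w * c / 2) ^ 2 ≤ x ^ 2 := pow_le_pow_left₀ (by positivity) hx 2
  rw [neg_div, neg_mul, neg_div, neg_le_neg_iff, div_le_div_iff₀ (by positivity) (by positivity)]
  nlinarith

end Real

theorem mucb_detection_with_tuned_parameters_general
    {Ω : Type*} [MeasurableSpace Ω] (P : Measure Ω) [IsProbabilityMeasure P]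
    (K T δ : ℝ) (hT : 1 ≤ T) (hδ : 0 < δ)
    (w : ℕ) (hw : 0 < w) (hweven : Even w)
    (hwbig : (4 / δ ^ 2) *
      (Real.sqrt (Real.log (2 * K * T ^ 2)) + Real.sqrt (Real.log (2 * T))) ^ 2 ≤ (w : ℝ))
    (b c : ℝ)
    (hb : b = Real.sqrt (((w : ℝ) / 2) * Real.log (2 * K * T ^ 2)))
    (hc : c = 2 * Real.sqrt (Real.log (2 * T) / w))
    (Z : ℕ → Ω → ℝ) (μ₁ μ₂ : ℝ)
    (hmeas : ∀ ℓ ∈ Finset.Icc 1 w, Measurable (Z ℓ))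
    (hbdd : ∀ ℓ ∈ Finset.Icc 1 w, ∀ᵐ ω ∂P, Z ℓ ω ∈ Set.Icc (0 : ℝ) 1)
    (hmean₁ : ∀ ℓ ∈ Finset.Icc 1 (w / 2), ∫ ω, Z ℓ ω ∂P = μ₁)
    (hmean₂ : ∀ ℓ ∈ Finset.Icc (w / 2 + 1) w, ∫ ω, Z ℓ ω ∂P = μ₂)
    (hindep : iIndepFun
      (fun ℓ : Finset.Icc 1 w => Z (ℓ : ℕ)) P)
    (hgap : δ ≤ |μ₂ - μ₁|)
    (S : Ω → ℝ)
    (hS : S = fun ω =>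
      (∑ ℓ ∈ Finset.Icc (w / 2 + 1) w, Z ℓ ω) - ∑ ℓ ∈ Finset.Icc 1 (w / 2), Z ℓ ω) :
    2 * b / w + c ≤ δ ∧
    2 * Real.exp (-(w : ℝ) * c ^ 2 / 4) = 1 / T ∧
    ENNReal.ofReal (1 - 1 / T) ≤ P {ω | b < |S ω|} := by
  have hw₀ : (0 : ℝ) < w := by exact_mod_cast hw
  have hc₀ : 0 ≤ c := hc ▸ by positivity
  have hthreshold : 2 * b / w + c ≤ δ := hb ▸ hc ▸ two_mul_sqrt_div_add_le hw₀ hδ hwbig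
  have hexp_eq : 2 * exp (-(w : ℝ) * c ^ 2 / 4) = 1 / T :=
    hc ▸ two_mul_exp_neg_mul_sq_div_four hw₀ (by linarith)
  refine ⟨hthreshold, hexp_eq, ofReal_one_sub_le_measure_of_measureReal_compl_le ?_⟩
  set m : ℝ := w / 2 * (μ₂ - μ₁) with hm
  have hsubG : HasSubgaussianMGF (fun ω ↦ S ω - m) (#(Icc 1 w) / 4) P := by
    have hcentered : (fun ω ↦ S ω - m) = fun ω ↦
        ∑ ℓ ∈ Icc 1 w, (if ℓ ≤ w / 2 then -1 else 1) * (Z ℓ ω - P[Z ℓ]) := by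
      ext ω
      rw [hweven.sum_Icc_sign_mul_sub hmean₁ hmean₂, hS]
    rw [hcentered]
    refine hasSubgaussianMGF_sum_sign_mul_sub_integral hindep
      (fun ℓ hℓ ↦ (hmeas ℓ hℓ).aemeasurable) hbdd fun ℓ _ ↦ ?_
    split_ifs <;> simp
  have hdev : w * c / 2 ≤ |m| - b := by
    have hmean_gap : w / 2 * δ ≤ |m| := by
      rw [hm, abs_mul, abs_of_pos (by positivity : (0 : ℝ) < w / 2)]
      gcongr
    have hscaled : w / 2 * (2 * b / w + c) = b + w * c / 2 := by field_simp
    linarith [mul_le_mul_of_nonneg_left hthreshold (by positivity : (0 : ℝ) ≤ w / 2)]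
  have hcard : ((#(Icc 1 w) / 4 : ℝ≥0) : ℝ) = w / 4 := by simp
  calc P.real {ω | b < |S ω|}ᶜ = P.real {ω | |S ω| ≤ b} := by simp only [Set.compl_ofPred, not_lt]
    _ ≤ exp (-(|m| - b) ^ 2 / (2 * (w / 4))) :=
      hcard ▸ hsubG.measureReal_abs_le_le_exp (by linarith [mul_nonneg hw₀.le hc₀])
    _ ≤ exp (-(w : ℝ) * c ^ 2 / 4) := exp_le_exp.2 (neg_sq_div_le_neg_mul_sq_div_four hw₀ hc₀ hdev)
    _ ≤ 1 / T := by linarith [exp_pos (-(w : ℝ) * c ^ 2 / 4)]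

/-- Let `K ≥ 1`, `T ≥ 1` and `δ > 0` be reals, and let `w` be an
even positive integer with `w ≥ (4/δ²)·(√(log(2KT²)) + √(log(2T)))²`.  Set
`b = √((w/2)·log(2KT²))` and `c = 2·√(log(2T)/w)`.  Then `δ ≥ 2b/w + c` and
`2·exp(−w·c²/4) = 1/T`.  Consequently, if `Z 1, …, Z (w/2)` are independent
`[0,1]`-valued with common mean `μ₁` and `Z (w/2+1), …, Z w` are independent
`[0,1]`-valued with common mean `μ₂`, all mutually independent, with
`|μ₂ − μ₁| ≥ δ`, then `P(|S| > b) ≥ 1 − 1/T` where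
`S = Σ_{ℓ=w/2+1}^{w} Z ℓ − Σ_{ℓ=1}^{w/2} Z ℓ`. -/
theorem mucb_detection_with_tuned_parameters
    {Ω : Type*} [MeasurableSpace Ω] (P : Measure Ω) [IsProbabilityMeasure P]
    (K T δ : ℝ) (hK : 1 ≤ K) (hT : 1 ≤ T) (hδ : 0 < δ)
    (w : ℕ) (hw : 0 < w) (hweven : Even w)
    (hwbig : (4 / δ ^ 2) *
      (Real.sqrt (Real.log (2 * K * T ^ 2)) + Real.sqrt (Real.log (2 * T))) ^ 2 ≤ (w : ℝ))
    (b c : ℝ)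
    (hb : b = Real.sqrt (((w : ℝ) / 2) * Real.log (2 * K * T ^ 2)))
    (hc : c = 2 * Real.sqrt (Real.log (2 * T) / w))
    (Z : ℕ → Ω → ℝ) (μ₁ μ₂ : ℝ)
    (hmeas : ∀ ℓ ∈ Finset.Icc 1 w, Measurable (Z ℓ))
    (hbdd : ∀ ℓ ∈ Finset.Icc 1 w, ∀ᵐ ω ∂P, Z ℓ ω ∈ Set.Icc (0 : ℝ) 1)
    (hmean₁ : ∀ ℓ ∈ Finset.Icc 1 (w / 2), ∫ ω, Z ℓ ω ∂P = μ₁)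
    (hmean₂ : ∀ ℓ ∈ Finset.Icc (w / 2 + 1) w, ∫ ω, Z ℓ ω ∂P = μ₂)
    (hindep : iIndepFun
      (fun ℓ : Finset.Icc 1 w => Z (ℓ : ℕ)) P)
    (hgap : δ ≤ |μ₂ - μ₁|)
    (S : Ω → ℝ)
    (hS : S = fun ω =>
      (∑ ℓ ∈ Finset.Icc (w / 2 + 1) w, Z ℓ ω) - ∑ ℓ ∈ Finset.Icc 1 (w / 2), Z ℓ ω) :
    2 * b / w + c ≤ δ ∧
    2 * Real.exp (-(w : ℝ) * c ^ 2 / 4) = 1 / T ∧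
    ENNReal.ofReal (1 - 1 / T) ≤ P {ω | b < |S ω|} :=
  mucb_detection_with_tuned_parameters_general P K T δ hT hδ w hw hweven hwbig b c hb hc Z μ₁ μ₂
    hmeas hbdd hmean₁ hmean₂ hindep hgap S hS
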